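/- Let σ be an automorphism of a ring R. Then R is σ-rigid if and only if R is strongly σ-semiprime and strongly σ-symmetric. -/
import Mathlib


/-- The coefficient of `x^n` in the product of two skew polynomials in `R[x;σ]`
(where `x·r = σ(r)·x`), given their coefficient functions. -/
def skewMul {R : Type*} [Ring R] (σ : R →+* R) (p q : ℕ → R) : ℕ → R :=
  fun n => ∑ i ∈ Finset.range (n + 1), p i * (⇑σ)^[i] (q (n - i))

/-- A ring is symmetric if `abc = 0` implies `acb = 0`. -/
def SymmetricRing (R : Type*) [Ring R] : Prop :=
  ∀ a b c : R, a * b * c = 0 → a * c * b = 0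

/-- `R` is strongly `σ`-symmetric if the skew polynomial ring `R[x;σ]` is symmetric,
expressed via the coefficientwise skew convolution. -/
def StronglySkewSymmetric (R : Type*) [Ring R] (σ : R →+* R) : Prop :=
  ∀ p q r : Polynomial R,
    skewMul σ (skewMul σ p.coeff q.coeff) r.coeff = 0 →
    skewMul σ (skewMul σ p.coeff r.coeff) q.coeff = 0

section Aux

variable {R : Type*} [Ring R]

lemma iterMul (σ : R →+* R) (k : ℕ) (a b : R) :
    (⇑σ)^[k] (a * b) = (⇑σ)^[k] a * (⇑σ)^[k] b := by
  rw [← RingHom.coe_pow]; exact map_mul _ _ _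

lemma iterZero (σ : R →+* R) (k : ℕ) : (⇑σ)^[k] (0 : R) = 0 := by
  rw [← RingHom.coe_pow]; exact map_zero _

variable (σ : R →+* R)

/-- rigid implies reduced -/
lemma rig_red (hrig : ∀ a : R, a * σ a = 0 → a = 0) (a : R) (h : a * a = 0) : a = 0 := by
  have h1 : a * σ a * σ (a * σ a) = 0 := by
    rw [map_mul, show a * σ a * (σ a * σ (σ a)) = a * (σ a * σ a) * σ (σ a) by
      simp only [mul_assoc], ← map_mul, h, map_zero, mul_zero, zero_mul]
  exact hrig a (hrig _ h1)

lemma rig_comm (hrig : ∀ a : R, a * σ a = 0 → a = 0) (a b : R) (h : a * b = 0) :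
    b * a = 0 := by
  apply rig_red σ hrig
  rw [show b * a * (b * a) = b * (a * b) * a by simp only [mul_assoc], h, mul_zero, zero_mul]

lemma rig_shift (hrig : ∀ a : R, a * σ a = 0 → a = 0) (a b : R) (h : a * b = 0) :
    a * σ b = 0 := by
  have hba : b * a = 0 := rig_comm σ hrig a b h
  apply hrig
  rw [map_mul, show a * σ b * (σ a * σ (σ b)) = a * (σ b * σ a) * σ (σ b) by
    simp only [mul_assoc], ← map_mul, hba, map_zero, mul_zero, zero_mul]

lemma rig_shift' (hinj : Function.Injective σ) (hrig : ∀ a : R, a * σ a = 0 → a = 0)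
    (a b : R) (h : a * σ b = 0) : a * b = 0 := by
  have h1 : σ b * a = 0 := rig_comm σ hrig a (σ b) h
  have h2 : σ b * σ a = 0 := rig_shift σ hrig (σ b) a h1
  rw [← map_mul] at h2
  have h3 : b * a = 0 := hinj (by rw [h2, map_zero])
  exact rig_comm σ hrig b a h3

lemma rig_shiftIter (hrig : ∀ a : R, a * σ a = 0 → a = 0) (k : ℕ) (a b : R)
    (h : a * b = 0) : a * (⇑σ)^[k] b = 0 := by
  induction k with
  | zero => simpa using h
  | succ n ih =>
      rw [Function.iterate_succ_apply']
      exact rig_shift σ hrig _ _ ih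

lemma rig_shiftIter' (hinj : Function.Injective σ) (hrig : ∀ a : R, a * σ a = 0 → a = 0)
    (k : ℕ) (a b : R) (h : a * (⇑σ)^[k] b = 0) : a * b = 0 := by
  induction k generalizing b with
  | zero => simpa using h
  | succ n ih =>
      rw [Function.iterate_succ_apply] at h
      exact rig_shift' σ hinj hrig a b (ih (σ b) h)

lemma rig_shiftIterL (hrig : ∀ a : R, a * σ a = 0 → a = 0) (k : ℕ) (a b : R)
    (h : a * b = 0) : (⇑σ)^[k] a * b = 0 := by
  have h1 : b * a = 0 := rig_comm σ hrig a b h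
  have h2 : b * (⇑σ)^[k] a = 0 := rig_shiftIter σ hrig k b a h1
  exact rig_comm σ hrig b _ h2

lemma rig_semicomm (hrig : ∀ a : R, a * σ a = 0 → a = 0) (a r b : R) (h : a * b = 0) :
    a * r * b = 0 := by
  have hba : b * a = 0 := rig_comm σ hrig a b h
  apply rig_red σ hrig
  rw [show a * r * b * (a * r * b) = a * (r * (b * a * (r * b))) by simp only [mul_assoc],
    hba, zero_mul, mul_zero, mul_zero]

lemma rig_symm3 (hrig : ∀ a : R, a * σ a = 0 → a = 0) (a b c : R) (h : a * b * c = 0) :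
    a * c * b = 0 := by
  rw [mul_assoc] at h
  have h2 : a * c * (b * c) = 0 := rig_semicomm σ hrig a c (b * c) h
  have h3 : a * c * b * c = 0 := by rwa [mul_assoc (a * c)]
  have h4 : c * (a * c * b) = 0 := rig_comm σ hrig _ _ h3
  have h5 : c * b * (a * c * b) = 0 := rig_semicomm σ hrig c b _ h4
  apply rig_red σ hrig
  rw [show a * c * b * (a * c * b) = a * (c * b * (a * c * b)) by simp only [mul_assoc],
    h5, mul_zero]

/-- Krempa / Hong–Kim–Kwak style key lemma: over a rigid endomorphism, a zero skew
product has all cross products of coefficients zero. -/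
lemma rig_key (hinj : Function.Injective σ) (hrig : ∀ a : R, a * σ a = 0 → a = 0)
    (f g : ℕ → R) (h : ∀ n, skewMul σ f g n = 0) : ∀ i j, f i * g j = 0 := by
  have main : ∀ n, ∀ k, k ≤ n → f k * g (n - k) = 0 := by
    intro n
    induction n using Nat.strong_induction_on with
    | _ n IH =>
      intro k
      induction k using Nat.strong_induction_on with
      | _ k IHk =>
        intro hk
        have h0 : ∑ i ∈ Finset.range (n + 1), f i * (⇑σ)^[i] (g (n - i)) = 0 := by
          have := h n; simpa [skewMul] using this
        have hsplit : ∑ i ∈ Finset.Ico k (n + 1), f i * (⇑σ)^[i] (g (n - i)) = 0 := by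
          rw [Finset.range_eq_Ico,
            ← Finset.sum_Ico_consecutive _ (Nat.zero_le k) (by omega : k ≤ n + 1)] at h0
          have hlow : ∑ i ∈ Finset.Ico 0 k, f i * (⇑σ)^[i] (g (n - i)) = 0 := by
            apply Finset.sum_eq_zero
            intro i hi
            have hik : i < k := (Finset.mem_Ico.mp hi).2
            exact rig_shiftIter σ hrig i _ _ (IHk i hik (by omega))
          rwa [hlow, zero_add] at h0
        have h2 : ∑ i ∈ Finset.Ico k (n + 1), f i * (⇑σ)^[i] (g (n - i)) * f k = 0 := by
          rw [← Finset.sum_mul, hsplit, zero_mul]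
        have h3 : ∀ i ∈ Finset.Ico k (n + 1), i ≠ k →
            f i * (⇑σ)^[i] (g (n - i)) * f k = 0 := by
          intro i hi hik
          have hmem := Finset.mem_Ico.mp hi
          have hki : k < i := lt_of_le_of_ne hmem.1 (Ne.symm hik)
          have h4 : f k * g (n - i) = 0 := by
            have := IH (k + (n - i)) (by omega) k (by omega)
            rwa [Nat.add_sub_cancel_left] at this
          have h5 : g (n - i) * f k = 0 := rig_comm σ hrig _ _ h4
          have h6 : (⇑σ)^[i] (g (n - i)) * f k = 0 := rig_shiftIterL σ hrig i _ _ h5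
          rw [mul_assoc, h6, mul_zero]
        have hterm : f k * (⇑σ)^[k] (g (n - k)) * f k = 0 := by
          have := Finset.sum_eq_single_of_mem k
            (Finset.mem_Ico.mpr ⟨le_refl k, by omega⟩) h3
          rwa [this] at h2
        have hdd : f k * (⇑σ)^[k] (g (n - k)) * (f k * (⇑σ)^[k] (g (n - k))) = 0 := by
          rw [← mul_assoc, hterm, zero_mul]
        exact rig_shiftIter' σ hinj hrig k _ _ (rig_red σ hrig _ hdd)
  intro i j
  have := main (i + j) i (Nat.le_add_right i j)
  rwa [Nat.add_sub_cancel_left] at this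

lemma rig_stronglySkewSymmetric (hinj : Function.Injective σ)
    (hrig : ∀ a : R, a * σ a = 0 → a = 0) : StronglySkewSymmetric R σ := by
  intro p q r h
  have h1 : ∀ i j, skewMul σ p.coeff q.coeff i * r.coeff j = 0 :=
    rig_key σ hinj hrig _ _ (fun n => by rw [h]; rfl)
  have h2 : ∀ u v j, p.coeff u * q.coeff v * r.coeff j = 0 := by
    intro u v j
    have hg : ∀ n, skewMul σ p.coeff (fun m => q.coeff m * (⇑σ)^[m] (r.coeff j)) n = 0 := by
      intro n
      have hc : skewMul σ p.coeff q.coeff n * (⇑σ)^[n] (r.coeff j) = 0 :=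
        rig_shiftIter σ hrig n _ _ (h1 n j)
      have hcongr : ∀ i ∈ Finset.range (n + 1),
          p.coeff i * (⇑σ)^[i] (q.coeff (n - i) * (⇑σ)^[n - i] (r.coeff j))
            = p.coeff i * (⇑σ)^[i] (q.coeff (n - i)) * (⇑σ)^[n] (r.coeff j) := by
        intro i hi
        have hin : i ≤ n := by
          have := Finset.mem_range.mp hi; omega
        rw [iterMul σ i, ← Function.iterate_add_apply,
          (by omega : i + (n - i) = n), mul_assoc]
      simp only [skewMul] at hc ⊢
      rw [Finset.sum_congr rfl hcongr, ← Finset.sum_mul]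
      exact hc
    have h3 := rig_key σ hinj hrig p.coeff _ hg u v
    have h4 : p.coeff u * q.coeff v * (⇑σ)^[v] (r.coeff j) = 0 := by
      rwa [mul_assoc]
    exact rig_shiftIter' σ hinj hrig v _ _ h4
  funext n
  show skewMul σ (skewMul σ p.coeff r.coeff) q.coeff n = 0
  simp only [skewMul]
  apply Finset.sum_eq_zero
  intro i hi
  have hin : i ≤ n := by have := Finset.mem_range.mp hi; omega
  rw [Finset.sum_mul]
  apply Finset.sum_eq_zero
  intro u hu
  have hui : u ≤ i := by have := Finset.mem_range.mp hu; omega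
  have t1 : p.coeff u * q.coeff (n - i) * r.coeff (i - u) = 0 := h2 u (n - i) (i - u)
  have t2 : p.coeff u * r.coeff (i - u) * q.coeff (n - i) = 0 := rig_symm3 σ hrig _ _ _ t1
  have t3 : p.coeff u * r.coeff (i - u) * (⇑σ)^[i - u] (q.coeff (n - i)) = 0 :=
    rig_shiftIter σ hrig _ _ _ t2
  rw [mul_assoc] at t3
  have t5 : p.coeff u * (⇑σ)^[u] (r.coeff (i - u) * (⇑σ)^[i - u] (q.coeff (n - i))) = 0 :=
    rig_shiftIter σ hrig u _ _ t3
  rw [iterMul σ u, ← Function.iterate_add_apply, (by omega : u + (i - u) = i),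
    ← mul_assoc] at t5
  exact t5

lemma skewMul_C_left (σ : R →+* R) (a : R) (f : ℕ → R) :
    skewMul σ (Polynomial.C a).coeff f = fun n => a * f n := by
  funext n
  simp only [skewMul]
  rw [Finset.sum_eq_single 0]
  · simp
  · intro i _ h0
    simp [Polynomial.coeff_C, h0]
  · intro habs
    exact absurd (Finset.mem_range.mpr (Nat.succ_pos n)) habs

lemma skewMul_eq_zero (σ : R →+* R) (f g : ℕ → R)
    (h : ∀ i j, f i * (⇑σ)^[i] (g j) = 0) : skewMul σ f g = 0 := by
  funext n
  show skewMul σ f g n = 0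
  simp only [skewMul]
  exact Finset.sum_eq_zero fun i _ => h i (n - i)

end Aux

theorem rigid_iff_stronglySemiprime_and_stronglySkewSymmetric
    {R : Type*} [Ring R] (σ : R ≃+* R) :
    (∀ a : R, a * σ a = 0 → a = 0) ↔
      ((∀ a : R, (∀ r : R, a * r * σ a = 0) → a = 0) ∧
        StronglySkewSymmetric R (σ : R →+* R)) := by
  constructor
  · intro hrig
    refine ⟨fun a ha => hrig a (by simpa using ha 1), ?_⟩
    exact rig_stronglySkewSymmetric (σ : R →+* R) σ.injective hrig
  · rintro ⟨hsp, hsym⟩ a ha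
    set τ : R →+* R := (σ : R →+* R) with hτ
    have haτ : a * τ a = 0 := ha
    -- Step 1: a * a = 0
    have h1 : skewMul τ (skewMul τ (Polynomial.C a).coeff (Polynomial.X).coeff)
        (Polynomial.C a).coeff = 0 := by
      rw [skewMul_C_left]
      apply skewMul_eq_zero
      intro i j
      by_cases hj : j = 0
      · subst hj
        by_cases hi : i = 1
        · subst hi
          simpa using haτ
        · simp [Polynomial.coeff_X, Ne.symm hi]
      · simp [Polynomial.coeff_C, hj, iterZero]
    have h2 := hsym (Polynomial.C a) Polynomial.X (Polynomial.C a) h1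
    rw [skewMul_C_left] at h2
    have ha2 : a * a = 0 := by
      have := congrFun h2 1
      simpa [skewMul, Finset.sum_range_succ] using this
    -- Step 2: ∀ b, a * b * σ a = 0
    apply hsp
    intro b
    have h3 : skewMul τ (skewMul τ (Polynomial.C a).coeff (Polynomial.C a).coeff)
        (Polynomial.C b * Polynomial.X).coeff = 0 := by
      rw [skewMul_C_left]
      apply skewMul_eq_zero
      intro i j
      by_cases hi : i = 0
      · subst hi
        simp only [Polynomial.coeff_C_zero, Function.iterate_zero, id_eq]
        rw [ha2, zero_mul]
      · simp [Polynomial.coeff_C, hi]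
    have h4 := hsym (Polynomial.C a) (Polynomial.C a) (Polynomial.C b * Polynomial.X) h3
    rw [skewMul_C_left] at h4
    have := congrFun h4 1
    have h5 : a * b * τ a = 0 := by
      simpa [skewMul, Finset.sum_range_succ, mul_assoc] using this
    exact h5
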